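/- For integers a > b > 0 and c = a - b + 1, the following identity of Schur polynomials in three variables holds: s_{(c,c,0)} · s_{(a,b,0)} = s_{(a+1,b,1)} · s_{(a-b,a-b,0)} + s_{(a+1,a+1,0)} · s_{(a-b,0,0)}. -/
import Mathlib


open MvPolynomial

lemma hsymm_fin_one (m : ℕ) : hsymm (Fin 1) ℤ m = X 0 ^ m := by
  have hu : ∀ s : Sym (Fin 1) m, s = Sym.replicate m 0 := by
    intro s
    apply Sym.coe_injective
    rw [Sym.coe_replicate, Multiset.eq_replicate]
    exact ⟨s.2, fun b _ => Subsingleton.elim b 0⟩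
  have huniv : (Finset.univ : Finset (Sym (Fin 1) m)) = {Sym.replicate m 0} :=
    Finset.eq_singleton_iff_unique_mem.2 ⟨Finset.mem_univ _, fun s _ => hu s⟩
  rw [hsymm, huniv, Finset.sum_singleton]
  show (Multiset.map X (Multiset.replicate m 0)).prod = X 0 ^ m
  rw [Multiset.map_replicate, Multiset.prod_replicate]

lemma hsymm_option (α : Type) [Fintype α] [DecidableEq α] (n : ℕ) :
    hsymm (Option α) ℤ (n+1) = X none * hsymm (Option α) ℤ n
      + rename Option.some (hsymm α ℤ (n+1)) := by
  rw [hsymm]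
  rw [← Equiv.sum_comp (symOptionSuccEquiv (α := α) (n := n)).symm]
  rw [Fintype.sum_sum_type]
  congr 1
  · rw [hsymm, Finset.mul_sum]
    exact Finset.sum_congr rfl fun s _ => by
      show (((none ::ₛ s : Sym (Option α) (n+1)) : Multiset (Option α)).map X).prod = _
      rw [Sym.coe_cons, Multiset.map_cons, Multiset.prod_cons]
      rfl
  · rw [hsymm, map_sum]
    refine Finset.sum_congr rfl fun s _ => ?_
    show (((s.map ⇑Function.Embedding.some : Sym (Option α) (n+1)) : Multiset (Option α)).map X).prod = _
    rw [Sym.coe_map, Multiset.map_map]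
    rw [map_multiset_prod, Multiset.map_map]
    congr 1
    refine Multiset.map_congr rfl fun a _ => ?_
    simp [rename_X]

lemma h2_rec (n : ℕ) : hsymm (Fin 2) ℤ (n+1)
    = X 0 * hsymm (Fin 2) ℤ n + X 1 ^ (n+1) := by
  have e := _root_.finSuccEquiv 1
  have key : ∀ m : ℕ, hsymm (Fin 2) ℤ m
      = rename (_root_.finSuccEquiv 1).symm (hsymm (Option (Fin 1)) ℤ m) :=
    fun m => (rename_hsymm _ ℤ m (_root_.finSuccEquiv 1).symm).symm
  rw [key (n+1), hsymm_option, map_add, map_mul, rename_X, key n, rename_rename,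
    hsymm_fin_one, map_pow, rename_X]
  norm_num

lemma h3_rec (n : ℕ) : hsymm (Fin 3) ℤ (n+1)
    = X 0 * hsymm (Fin 3) ℤ n + rename Fin.succ (hsymm (Fin 2) ℤ (n+1)) := by
  have key : ∀ m : ℕ, hsymm (Fin 3) ℤ m
      = rename (_root_.finSuccEquiv 2).symm (hsymm (Option (Fin 2)) ℤ m) :=
    fun m => (rename_hsymm _ ℤ m (_root_.finSuccEquiv 2).symm).symm
  rw [key (n+1), hsymm_option, map_add, map_mul, rename_X, key n, rename_rename,
    show ((_root_.finSuccEquiv 2).symm none) = 0 from rfl,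
    show (⇑(_root_.finSuccEquiv 2).symm ∘ some) = Fin.succ from rfl]

lemma h2_alt (n : ℕ) : hsymm (Fin 2) ℤ n * (X 0 - X 1) = X 0 ^ (n+1) - X 1 ^ (n+1) := by
  induction n with
  | zero => rw [hsymm_zero]; ring
  | succ n ih => rw [h2_rec]; linear_combination (X 0 : MvPolynomial (Fin 2) ℤ) * ih

noncomputable def Alt (u v w : ℕ) : MvPolynomial (Fin 3) ℤ :=
  X 0 ^ u * X 1 ^ v * X 2 ^ w - X 0 ^ u * X 1 ^ w * X 2 ^ v
  - X 0 ^ v * X 1 ^ u * X 2 ^ w + X 0 ^ w * X 1 ^ u * X 2 ^ v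
  + X 0 ^ v * X 1 ^ w * X 2 ^ u - X 0 ^ w * X 1 ^ v * X 2 ^ u

noncomputable def D3 : MvPolynomial (Fin 3) ℤ := (X 0 - X 1) * (X 0 - X 2) * (X 1 - X 2)

lemma h2s_alt (n : ℕ) : rename Fin.succ (hsymm (Fin 2) ℤ n) * (X 1 - X 2)
    = X 1 ^ (n+1) - X 2 ^ (n+1) := by
  have := congrArg (rename (Fin.succ : Fin 2 → Fin 3)) (h2_alt n)
  rw [map_mul, map_sub, map_sub, map_pow, map_pow, rename_X, rename_X] at this
  convert this using 3 <;> rfl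

lemma L (m : ℕ) : hsymm (Fin 3) ℤ m * D3 = Alt (m+2) 1 0 := by
  induction m with
  | zero => rw [hsymm_zero, Alt, D3]; ring
  | succ n ih =>
    rw [h3_rec, Alt, D3]
    rw [Alt, D3] at ih
    have h2 := h2s_alt (n+1)
    linear_combination (X 0 : MvPolynomial (Fin 3) ℤ) * ih
      + ((X 0 - X 1) * (X 0 - X 2)) * h2

/-- Complete homogeneous symmetric polynomial in `n` variables, indexed by an
integer, with the convention `h_k = 0` for `k < 0` and `h_0 = 1`. -/
noncomputable def hInt (n : ℕ) (k : ℤ) : MvPolynomial (Fin n) ℤ :=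
  if 0 ≤ k then hsymm (Fin n) ℤ k.toNat else 0

/-- The Schur polynomial of `α` in `n` variables, defined via the
Jacobi–Trudi determinant `s_α = det (h_{α_i - i + j})_{i,j}`. -/
noncomputable def schur (n : ℕ) (α : Fin n → ℕ) : MvPolynomial (Fin n) ℤ :=
  Matrix.det (Matrix.of fun i j : Fin n => hInt n ((α i : ℤ) - (i : ℕ) + (j : ℕ)))

/-- A symmetric polynomial is Schur positive if it is a nonnegative integer
combination of Schur polynomials of partitions. -/
def SchurPositive (n : ℕ) (f : MvPolynomial (Fin n) ℤ) : Prop :=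
  ∃ c : (Fin n → ℕ) →₀ ℕ, (∀ lam ∈ c.support, Antitone lam) ∧
    f = c.sum fun lam k => (k : ℤ) • schur n lam

lemma hInt_cast (n : ℕ) {k : ℤ} (h : k = n) : hInt 3 k = hsymm (Fin 3) ℤ n := by
  subst h; simp [hInt]

lemma hInt_neg {k : ℤ} (h : k < 0) : hInt 3 k = 0 := if_neg (by omega)

lemma D3_ne : D3 ≠ 0 := by
  refine mul_ne_zero (mul_ne_zero ?_ ?_) ?_ <;>
    exact sub_ne_zero_of_ne fun h => by simpa using (X_injective h : _)

lemma hInt_natCast (m : ℕ) : hInt 3 (m : ℤ) = hsymm (Fin 3) ℤ m := by simp [hInt]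

lemma schur_row2 (p q : ℕ) : schur 3 ![p, q, 0]
    = hsymm (Fin 3) ℤ p * hsymm (Fin 3) ℤ q
      - hsymm (Fin 3) ℤ (p+1) * hInt 3 ((q : ℤ) - 1) := by
  rw [schur, Matrix.det_fin_three]
  simp only [Matrix.of_apply, Matrix.cons_val_zero, Matrix.cons_val_one, Matrix.head_cons,
    Matrix.cons_val_two, Matrix.tail_cons, Matrix.head_fin_const, Fin.val_zero, Fin.val_one,
    Fin.val_two, Fin.isValue]
  push_cast
  rw [show ((p:ℤ) - 0 + 0) = ((p:ℕ):ℤ) by push_cast; ring,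
    show ((p:ℤ) - 0 + 1) = ((p+1:ℕ):ℤ) by push_cast; ring,
    show ((p:ℤ) - 0 + 2) = ((p+2:ℕ):ℤ) by push_cast; ring,
    show ((q:ℤ) - 1 + 1) = ((q:ℕ):ℤ) by push_cast; ring,
    show ((q:ℤ) - 1 + 2) = ((q+1:ℕ):ℤ) by push_cast; ring,
    show ((q:ℤ) - 1 + 0) = (q:ℤ) - 1 by ring,
    hInt_natCast, hInt_natCast, hInt_natCast, hInt_natCast, hInt_natCast,
    hInt_cast (k := 0) 0 (by norm_num), hsymm_zero,
    hInt_neg (k := -1) (by norm_num), hInt_neg (k := -2) (by norm_num)]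
  ring

lemma schur_row3 (a b : ℕ) : schur 3 ![a+1, b+1, 1]
    = hsymm (Fin 3) ℤ (a+1) * hsymm (Fin 3) ℤ (b+1) * hsymm (Fin 3) ℤ 1
      - hsymm (Fin 3) ℤ (a+1) * hsymm (Fin 3) ℤ (b+2)
      - hsymm (Fin 3) ℤ (a+2) * hsymm (Fin 3) ℤ b * hsymm (Fin 3) ℤ 1
      + hsymm (Fin 3) ℤ (a+3) * hsymm (Fin 3) ℤ b := by
  rw [schur, Matrix.det_fin_three]
  simp only [Matrix.of_apply, Matrix.cons_val_zero, Matrix.cons_val_one, Matrix.head_cons,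
    Matrix.cons_val_two, Matrix.tail_cons, Matrix.head_fin_const, Fin.val_zero, Fin.val_one,
    Fin.val_two, Fin.isValue]
  push_cast
  rw [show ((a:ℤ) + 1 - 0 + 0) = ((a+1:ℕ):ℤ) by push_cast; ring,
    show ((a:ℤ) + 1 - 0 + 1) = ((a+2:ℕ):ℤ) by push_cast; ring,
    show ((a:ℤ) + 1 - 0 + 2) = ((a+3:ℕ):ℤ) by push_cast; ring,
    show ((b:ℤ) + 1 - 1 + 0) = ((b:ℕ):ℤ) by push_cast; ring,
    show ((b:ℤ) + 1 - 1 + 1) = ((b+1:ℕ):ℤ) by push_cast; ring,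
    show ((b:ℤ) + 1 - 1 + 2) = ((b+2:ℕ):ℤ) by push_cast; ring,
    hInt_natCast, hInt_natCast, hInt_natCast, hInt_natCast, hInt_natCast, hInt_natCast,
    hInt_cast (k := 0) 0 (by norm_num), hsymm_zero,
    hInt_cast (k := 1) 1 (by norm_num),
    hInt_neg (k := -1) (by norm_num)]
  ring

lemma tworow (p q : ℕ) :
    (hsymm (Fin 3) ℤ (q+p) * hsymm (Fin 3) ℤ q
      - hsymm (Fin 3) ℤ (q+p+1) * hInt 3 ((q:ℤ) - 1)) * D3 = Alt (q+p+2) (q+1) 0 := by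
  rcases q with _ | q
  · rw [hInt_neg (by norm_num), hsymm_zero]
    simpa using L p
  · rw [hInt_cast q (by push_cast; ring)]
    apply mul_right_cancel₀ D3_ne
    have l1 := L (q+1+p); have l2 := L (q+1); have l3 := L (q+1+p+1); have l4 := L q
    calc (hsymm (Fin 3) ℤ (q+1+p) * hsymm (Fin 3) ℤ (q+1)
          - hsymm (Fin 3) ℤ (q+1+p+1) * hsymm (Fin 3) ℤ q) * D3 * D3
        = (hsymm (Fin 3) ℤ (q+1+p) * D3) * (hsymm (Fin 3) ℤ (q+1) * D3)
          - (hsymm (Fin 3) ℤ (q+1+p+1) * D3) * (hsymm (Fin 3) ℤ q * D3) := by ring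
      _ = Alt (q+1+p+2) 1 0 * Alt (q+1+2) 1 0 - Alt (q+1+p+1+2) 1 0 * Alt (q+2) 1 0 := by
          rw [l1, l2, l3, l4]
      _ = Alt (q+1+p+2) (q+1+1) 0 * D3 := by
          simp only [Alt, D3]; ring

lemma threerow (a b : ℕ) :
    (hsymm (Fin 3) ℤ (a+1) * hsymm (Fin 3) ℤ (b+1) * hsymm (Fin 3) ℤ 1
      - hsymm (Fin 3) ℤ (a+1) * hsymm (Fin 3) ℤ (b+2)
      - hsymm (Fin 3) ℤ (a+2) * hsymm (Fin 3) ℤ b * hsymm (Fin 3) ℤ 1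
      + hsymm (Fin 3) ℤ (a+3) * hsymm (Fin 3) ℤ b) * D3 = Alt (a+3) (b+2) 1 := by
  apply mul_right_cancel₀ (pow_ne_zero 2 D3_ne)
  have l1 := L (a+1); have l2 := L (b+1); have l3 := L 1; have l4 := L (b+2)
  have l5 := L (a+2); have l6 := L b; have l7 := L (a+3)
  calc (hsymm (Fin 3) ℤ (a+1) * hsymm (Fin 3) ℤ (b+1) * hsymm (Fin 3) ℤ 1
      - hsymm (Fin 3) ℤ (a+1) * hsymm (Fin 3) ℤ (b+2)
      - hsymm (Fin 3) ℤ (a+2) * hsymm (Fin 3) ℤ b * hsymm (Fin 3) ℤ 1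
      + hsymm (Fin 3) ℤ (a+3) * hsymm (Fin 3) ℤ b) * D3 * D3 ^ 2
      = (hsymm (Fin 3) ℤ (a+1) * D3) * (hsymm (Fin 3) ℤ (b+1) * D3) * (hsymm (Fin 3) ℤ 1 * D3)
        - (hsymm (Fin 3) ℤ (a+1) * D3) * (hsymm (Fin 3) ℤ (b+2) * D3) * D3
        - (hsymm (Fin 3) ℤ (a+2) * D3) * (hsymm (Fin 3) ℤ b * D3) * (hsymm (Fin 3) ℤ 1 * D3)
        + (hsymm (Fin 3) ℤ (a+3) * D3) * (hsymm (Fin 3) ℤ b * D3) * D3 := by ring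
    _ = Alt (a+3) 1 0 * Alt (b+3) 1 0 * Alt 3 1 0
        - Alt (a+3) 1 0 * Alt (b+4) 1 0 * D3
        - Alt (a+4) 1 0 * Alt (b+2) 1 0 * Alt 3 1 0
        + Alt (a+5) 1 0 * Alt (b+2) 1 0 * D3 := by
        rw [l1, l2, l3, l4, l5, l6, l7]
    _ = Alt (a+3) (b+2) 1 * D3 ^ 2 := by
        simp only [Alt, D3]; ring


/-- For `a > b > 0` and `c = a - b + 1`:
`s_{(c,c,0)} s_{(a,b,0)} = s_{(a+1,b,1)} s_{(a-b,a-b,0)} + s_{(a+1,a+1,0)} s_{(a-b,0,0)}`. -/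
theorem schur_identity_family2_first (a b : ℕ) (hab : b < a) (hb : 0 < b) :
    schur 3 ![a - b + 1, a - b + 1, 0] * schur 3 ![a, b, 0] =
      schur 3 ![a + 1, b, 1] * schur 3 ![a - b, a - b, 0] +
      schur 3 ![a + 1, a + 1, 0] * schur 3 ![a - b, 0, 0] := by
  obtain ⟨b', rfl⟩ : ∃ b'', b = b'' + 1 := ⟨b - 1, by omega⟩
  obtain ⟨d, rfl⟩ : ∃ d, a = b' + 1 + (d + 1) := ⟨a - b' - 2, by omega⟩
  rw [show b' + 1 + (d + 1) - (b' + 1) = d + 1 from by omega]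
  rw [schur_row2 (d+1+1) (d+1+1), schur_row2 (b'+1+(d+1)) (b'+1),
    schur_row3 (b'+1+(d+1)) b', schur_row2 (d+1) (d+1),
    schur_row2 (b'+1+(d+1)+1) (b'+1+(d+1)+1), schur_row2 (d+1) 0]
  have t1 := tworow 0 (d+1+1)
  have t2 := tworow (d+1) (b'+1)
  have t3 := threerow (b'+1+(d+1)) b'
  have t4 := tworow 0 (d+1)
  have t5 := tworow 0 (b'+1+(d+1)+1)
  have t6 := tworow (d+1) 0
  simp only [Nat.zero_add] at t6
  have P : Alt (d+1+1+2) (d+1+1+1) 0 * Alt (b'+1+(d+1)+2) (b'+1+1) 0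
      = Alt (b'+1+(d+1)+3) (b'+2) 1 * Alt (d+1+2) (d+1+1) 0
        + Alt (b'+1+(d+1)+1+2) (b'+1+(d+1)+1+1) 0 * Alt (d+1+2) 1 0 := by
    simp only [Alt]; ring
  apply mul_right_cancel₀ (pow_ne_zero 2 D3_ne)
  linear_combination
    ((hsymm (Fin 3) ℤ (b'+1+(d+1)) * hsymm (Fin 3) ℤ (b'+1)
      - hsymm (Fin 3) ℤ (b'+1+(d+1)+1) * hInt 3 (((b'+1 : ℕ) : ℤ) - 1)) * D3) * t1
    + Alt (d+1+1+2) (d+1+1+1) 0 * t2 + P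
    - ((hsymm (Fin 3) ℤ (d+1) * hsymm (Fin 3) ℤ (d+1)
      - hsymm (Fin 3) ℤ (d+1+1) * hInt 3 (((d+1 : ℕ) : ℤ) - 1)) * D3) * t3
    - Alt (b'+1+(d+1)+3) (b'+2) 1 * t4
    - ((hsymm (Fin 3) ℤ (d+1) * hsymm (Fin 3) ℤ 0
      - hsymm (Fin 3) ℤ (d+1+1) * hInt 3 (((0 : ℕ) : ℤ) - 1)) * D3) * t5
    - Alt (b'+1+(d+1)+1+2) (b'+1+(d+1)+1+1) 0 * t6
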